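/- The face operators on interactions satisfy the simplicial identity: for all i < j, F_i ∘ F_j = F_{j−1} ∘ F_i. -/
import Mathlib


/-- An interaction over a vertex set `V`: every vertex is a `1`-interaction, and the
ordered pair of an `s`-interaction and a `t`-interaction is an `(s+t)`-interaction. -/
inductive Interaction (V : Type) : Type
  | of (v : V)
  | pair (l r : Interaction V)

namespace Interaction

/-- The order `n` of an `n`-interaction. -/
def order {V : Type} : Interaction V → ℕ
  | of _ => 1
  | pair l r => order l + order r

/-- The `j`-th face of an interaction: remove the `j`-th leaf of the corresponding
binary tree and contract (replace the minimal subtree containing the `j`-th leaf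
by its other child). -/
def face {V : Type} : Interaction V → ℕ → Interaction V
  | of v, _ => of v
  | pair l r, j =>
      if j ≤ l.order then (if l.order = 1 then r else pair (l.face j) r)
      else (if r.order = 1 then l else pair l (r.face (j - l.order)))

/-- Relabelling of leaves by a vertex map. -/
def map {V W : Type} (f : V → W) : Interaction V → Interaction W
  | of v => of (f v)
  | pair l r => pair (l.map f) (r.map f)

lemma one_le_order {V : Type} (σ : Interaction V) : 1 ≤ σ.order := by
  induction σ with
  | of v => simp [order]
  | pair l r ihl ihr => simp only [order]; omega

lemma face_pair {V : Type} (l r : Interaction V) (j : ℕ) :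
    (pair l r).face j =
      if j ≤ l.order then (if l.order = 1 then r else pair (l.face j) r)
      else (if r.order = 1 then l else pair l (r.face (j - l.order))) := rfl

lemma face_pair_left {V : Type} (l r : Interaction V) (j : ℕ)
    (h : j ≤ l.order) (h2 : 2 ≤ l.order) :
    (pair l r).face j = pair (l.face j) r := by
  rw [face_pair, if_pos h, if_neg (by omega)]

lemma face_pair_left_one {V : Type} (l r : Interaction V) (j : ℕ)
    (h : j ≤ l.order) (h2 : l.order = 1) :
    (pair l r).face j = r := by
  rw [face_pair, if_pos h, if_pos h2]

lemma face_pair_right {V : Type} (l r : Interaction V) (j : ℕ)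
    (h : l.order < j) (h2 : 2 ≤ r.order) :
    (pair l r).face j = pair l (r.face (j - l.order)) := by
  rw [face_pair, if_neg (by omega), if_neg (by omega)]

lemma face_pair_right_one {V : Type} (l r : Interaction V) (j : ℕ)
    (h : l.order < j) (h2 : r.order = 1) :
    (pair l r).face j = l := by
  rw [face_pair, if_neg (by omega), if_pos h2]

lemma order_face {V : Type} (σ : Interaction V) (h : 2 ≤ σ.order) (j : ℕ)
    (hj : j ≤ σ.order) : (σ.face j).order = σ.order - 1 := by
  induction σ generalizing j with
  | of v => simp [order] at h
  | pair l r ihl ihr =>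
    have hl := one_le_order l
    have hr := one_le_order r
    simp only [order] at h hj ⊢
    simp only [face]
    split_ifs with h1 h2 h3
    · omega
    · simp only [order]
      have := ihl (by omega) j (by omega)
      omega
    · omega
    · simp only [order]
      have := ihr (by omega) (j - l.order) (by omega)
      omega

end Interaction

/-- the face operators on interactions satisfy the simplicial identity
`F_i ∘ F_j = F_{j-1} ∘ F_i` for all `i < j` (wherever the composite is defined, i.e. on
interactions of order at least 3). -/
theorem face_face (V : Type) (σ : Interaction V) (hσ : 3 ≤ σ.order)
    (i j : ℕ) (hi : 1 ≤ i) (hij : i < j) (hj : j ≤ σ.order) :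
    (σ.face j).face i = (σ.face i).face (j - 1) := by
  induction σ generalizing i j with
  | of v => simp [Interaction.order] at hσ
  | pair l r ihl ihr =>
    have hl := Interaction.one_le_order l
    have hr := Interaction.one_le_order r
    simp only [Interaction.order] at hσ hj
    by_cases hja : j ≤ l.order
    · -- Case 1: both faces in the left subtree; l.order ≥ 2
      have ha2 : 2 ≤ l.order := by omega
      have hoj : (l.face j).order = l.order - 1 :=
        Interaction.order_face l ha2 j hja
      have hoi : (l.face i).order = l.order - 1 :=
        Interaction.order_face l ha2 i (by omega)
      rw [Interaction.face_pair_left l r j hja ha2,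
          Interaction.face_pair_left l r i (by omega) ha2]
      by_cases ha3 : 3 ≤ l.order
      · rw [Interaction.face_pair_left _ r i (by rw [hoj]; omega) (by rw [hoj]; omega),
            Interaction.face_pair_left _ r (j - 1) (by rw [hoi]; omega) (by rw [hoi]; omega),
            ihl ha3 i j hi hij hja]
      · rw [Interaction.face_pair_left_one _ r i (by rw [hoj]; omega) (by rw [hoj]; omega),
            Interaction.face_pair_left_one _ r (j - 1) (by rw [hoi]; omega) (by rw [hoi]; omega)]
    · by_cases hia : i ≤ l.order
      · by_cases ha1 : l.order = 1
        · -- Case 2a: l.order = 1 (so i = 1), j in right, r.order ≥ 2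
          rw [Interaction.face_pair_right l r j (by omega) (by omega),
              Interaction.face_pair_left_one l _ i hia ha1,
              Interaction.face_pair_left_one l r i hia ha1, ha1]
        · have ha2 : 2 ≤ l.order := by omega
          have hoi : (l.face i).order = l.order - 1 :=
            Interaction.order_face l ha2 i hia
          by_cases hb1 : r.order = 1
          · -- Case 2b: j = l.order + 1, right subtree is a leaf
            rw [Interaction.face_pair_right_one l r j (by omega) hb1,
                Interaction.face_pair_left l r i hia ha2,
                Interaction.face_pair_right_one (l.face i) r (j - 1) (by rw [hoi]; omega) hb1]
          · -- Case 2c: i in left, j in right, both subtrees of order ≥ 2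
            have hb2 : 2 ≤ r.order := by omega
            rw [Interaction.face_pair_right l r j (by omega) hb2,
                Interaction.face_pair_left l _ i hia ha2,
                Interaction.face_pair_left l r i hia ha2,
                Interaction.face_pair_right (l.face i) r (j - 1) (by rw [hoi]; omega) hb2, hoi]
            congr 2
            omega
      · -- Case 3: both faces in the right subtree; r.order ≥ 2
        have hb2 : 2 ≤ r.order := by omega
        have hoj : (r.face (j - l.order)).order = r.order - 1 :=
          Interaction.order_face r hb2 _ (by omega)
        have hoi : (r.face (i - l.order)).order = r.order - 1 :=
          Interaction.order_face r hb2 _ (by omega)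
        rw [Interaction.face_pair_right l r j (by omega) hb2,
            Interaction.face_pair_right l r i (by omega) hb2]
        by_cases hb3 : 3 ≤ r.order
        · rw [Interaction.face_pair_right l _ i (by omega) (by rw [hoj]; omega),
              Interaction.face_pair_right l _ (j - 1) (by omega) (by rw [hoi]; omega),
              ihr hb3 (i - l.order) (j - l.order) (by omega) (by omega) (by omega)]
          congr 2
          omega
        · rw [Interaction.face_pair_right_one l _ i (by omega) (by rw [hoj]; omega),
              Interaction.face_pair_right_one l _ (j - 1) (by omega) (by rw [hoi]; omega)]
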